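/- Let $\eta \in (0, 1/2)$ and $\rho > 0$, and for even $\tau$ suppose $p_{2\tau-1} - p_{2\tau} \geq \frac{\rho}{\beta_{\max}} (2\tau)^{-\eta} > 0$ for each $\tau = 1, \ldots, \lfloor (d-1)/2 \rfloor$ with $d \geq 3$ and $\beta_{\max} > 0$. Then, with $\bar p = \frac{1}{d-1}\sum_{\tau=1}^{d-1} p_\tau$, $\sum_{\tau=1}^{d-1} (p_\tau - \bar p)^2 \geq \frac{\rho^2 2^{-2\eta}}{2\beta_{\max}^2} \cdot \frac{1}{1-2\eta}\left( \left(\lfloor \tfrac{d-1}{2}\rfloor + 1\right)^{1-2\eta} - 1 \right)$. -/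

import Mathlib

/-! Pairing the prices `2τ - 1, 2τ` and using `(x - c)² + (y - c)² ≥ (x - y)² / 2` bounds the
dispersion below by `ρ² 2^(-2η) / (2 βmax²) · ∑_{τ ≤ m} τ^(-2η)`, and since `z ↦ z^(-2η)` is
decreasing this sum dominates `∫₁^{m+1} z^(-2η) dz = ((m + 1)^(1-2η) - 1) / (1 - 2η)`. -/

open Finset

theorem integral_rpow_le_sum_Icc {r : ℝ} (hr : r ≤ 0) (m : ℕ) :
    ∫ x in (1 : ℝ)..(m + 1), x ^ r ≤ ∑ k ∈ Icc 1 m, (k : ℝ) ^ r := by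
  have hanti : AntitoneOn (fun x : ℝ ↦ x ^ r) (Set.Icc (1 : ℕ) (m + 1 : ℕ)) :=
    fun x hx y _ hxy ↦
      Real.rpow_le_rpow_of_nonpos (one_pos.trans_le (by exact_mod_cast hx.1)) hxy hr
  simpa [Ico_add_one_right_eq_Icc] using hanti.integral_le_sum_Ico (by omega)

theorem one_add_rpow_sub_one_div_le_sum_Icc {r : ℝ} (hr : r ≤ 0) (m : ℕ) :
    1 / (r + 1) * (((m : ℝ) + 1) ^ (r + 1) - 1) ≤ ∑ k ∈ Icc 1 m, (k : ℝ) ^ r := by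
  -- At `r = -1` the left side is `0` because `1 / 0 = 0`.
  rcases eq_or_ne r (-1) with rfl | hr1
  · simpa using sum_nonneg fun k _ ↦ by positivity
  have hzero : (0 : ℝ) ∉ Set.uIcc 1 ((m : ℝ) + 1) := by
    rw [Set.uIcc_of_le (by linarith [m.cast_nonneg (α := ℝ)])]; simp
  have := integral_rpow_le_sum_Icc hr m
  rwa [integral_rpow (Or.inr ⟨hr1, hzero⟩), Real.one_rpow, ← one_div_mul_eq_div] at this

theorem sum_Icc_two_mul {M : Type*} [AddCommMonoid M] (f : ℕ → M) (m : ℕ) :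
    ∑ i ∈ Icc 1 (2 * m), f i = ∑ k ∈ Icc 1 m, (f (2 * k - 1) + f (2 * k)) := by
  induction m with
  | zero => simp
  | succ m ih =>
    rw [show 2 * (m + 1) = 2 * m + 1 + 1 by ring, sum_Icc_succ_top (by omega),
      sum_Icc_succ_top (by omega), ih, sum_Icc_succ_top (by omega), add_assoc]
    simp [Nat.mul_succ]

theorem sum_pairs_le_sum_Icc {M : Type*} [AddCommMonoid M] [PartialOrder M]
    [IsOrderedAddMonoid M] {f : ℕ → M} (hf : ∀ i, 0 ≤ f i) {m n : ℕ} (hmn : 2 * m ≤ n) :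
    ∑ k ∈ Icc 1 m, (f (2 * k - 1) + f (2 * k)) ≤ ∑ i ∈ Icc 1 n, f i := by
  rw [← sum_Icc_two_mul]
  exact sum_le_sum_of_subset_of_nonneg (Icc_subset_Icc_right hmn) fun i _ _ ↦ hf i

theorem half_sq_le_sq_sub_add_sq_sub {x y a : ℝ} (ha : 0 ≤ a) (h : a ≤ x - y) (c : ℝ) :
    a ^ 2 / 2 ≤ (x - c) ^ 2 + (y - c) ^ 2 := by
  nlinarith [sq_nonneg (x + y - 2 * c), pow_le_pow_left₀ ha h 2]

theorem mul_two_mul_rpow_neg_sq (b η t : ℝ) (ht : 0 ≤ t) :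
    (b * (2 * t) ^ (-η)) ^ 2 = b ^ 2 * (2 : ℝ) ^ (-(2 * η)) * t ^ (-(2 * η)) := by
  rw [mul_pow, ← Real.rpow_mul_natCast (by positivity), Real.mul_rpow zero_le_two ht]
  ring_nf

theorem stmt_8_general (η ρ βmax : ℝ) (hη : 0 < η) (hρ : 0 < ρ)
    (hβ : 0 < βmax) (d : ℕ) (p : ℕ → ℝ)
    (hdisp : ∀ τ ∈ Finset.Icc 1 ((d - 1) / 2),
      p (2 * τ - 1) - p (2 * τ) ≥ (ρ / βmax) * ((2 * τ : ℝ)) ^ (-η)) :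
    ∑ τ ∈ Finset.Icc 1 (d - 1),
        (p τ - (∑ ν ∈ Finset.Icc 1 (d - 1), p ν) / ((d : ℝ) - 1)) ^ 2 ≥
      (ρ ^ 2 * (2 : ℝ) ^ (-(2 * η)) / (2 * βmax ^ 2)) * (1 / (1 - 2 * η)) *
        (((((d - 1) / 2 : ℕ) : ℝ) + 1) ^ (1 - 2 * η) - 1) := by
  set m := (d - 1) / 2
  set pbar := (∑ ν ∈ Finset.Icc 1 (d - 1), p ν) / ((d : ℝ) - 1)
  set C := ρ ^ 2 * (2 : ℝ) ^ (-(2 * η)) / (2 * βmax ^ 2)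
  have hpair : ∀ k ∈ Icc 1 m, C * (k : ℝ) ^ (-(2 * η)) ≤
      (p (2 * k - 1) - pbar) ^ 2 + (p (2 * k) - pbar) ^ 2 := by
    intro k hk
    have h := half_sq_le_sq_sub_add_sq_sub (by positivity) (hdisp k hk) pbar
    rw [mul_two_mul_rpow_neg_sq _ _ _ k.cast_nonneg, div_pow] at h
    convert h using 1
    simp only [C]
    field_simp
  have hsum := one_add_rpow_sub_one_div_le_sum_Icc (r := -(2 * η)) (by linarith) m
  rw [show -(2 * η) + 1 = 1 - 2 * η by ring] at hsum
  calc C * (1 / (1 - 2 * η)) * (((m : ℝ) + 1) ^ (1 - 2 * η) - 1)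
      ≤ C * ∑ k ∈ Icc 1 m, (k : ℝ) ^ (-(2 * η)) := by
        rw [mul_assoc]; exact mul_le_mul_of_nonneg_left hsum (by positivity)
    _ ≤ ∑ k ∈ Icc 1 m, ((p (2 * k - 1) - pbar) ^ 2 + (p (2 * k) - pbar) ^ 2) := by
        rw [mul_sum]; exact sum_le_sum hpair
    _ ≤ ∑ τ ∈ Icc 1 (d - 1), (p τ - pbar) ^ 2 :=
        sum_pairs_le_sum_Icc (f := fun i ↦ (p i - pbar) ^ 2) (fun i ↦ sq_nonneg _) (by omega)

theorem stmt_8 (η ρ βmax : ℝ) (hη : 0 < η) (hη2 : η < 1 / 2) (hρ : 0 < ρ)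
    (hβ : 0 < βmax) (d : ℕ) (hd : 3 ≤ d) (p : ℕ → ℝ)
    (hdisp : ∀ τ ∈ Finset.Icc 1 ((d - 1) / 2),
      p (2 * τ - 1) - p (2 * τ) ≥ (ρ / βmax) * ((2 * τ : ℝ)) ^ (-η)) :
    ∑ τ ∈ Finset.Icc 1 (d - 1),
        (p τ - (∑ ν ∈ Finset.Icc 1 (d - 1), p ν) / ((d : ℝ) - 1)) ^ 2 ≥
      (ρ ^ 2 * (2 : ℝ) ^ (-(2 * η)) / (2 * βmax ^ 2)) * (1 / (1 - 2 * η)) *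
        (((((d - 1) / 2 : ℕ) : ℝ) + 1) ^ (1 - 2 * η) - 1) :=
  stmt_8_general η ρ βmax hη hρ hβ d p hdisp
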